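/- arXiv:2504.07306 — 5 statements merged into one kernel-verified Lean document; each statement's English description precedes it below -/
import Mathlib

section
/- If (sigma, tau) is a good pair of permutations of {1,...,n}, then (w_0 sigma w_0, w_0 tau w_0) is also a good pair, where w_0 is the longest permutation. -/
open Finset

/-- The `j`-th entry of the Lehmer code of `w`: the number of `k > j` with `w k < w j`. -/
def LC {n : ℕ} (w : Equiv.Perm (Fin n)) (j : Fin n) : ℕ :=
  (Finset.univ.filter (fun k => j < k ∧ w k < w j)).card

/-- `L'_j(w) = L_j(w⁻¹)`. -/
def LC' {n : ℕ} (w : Equiv.Perm (Fin n)) (j : Fin n) : ℕ := LC w⁻¹ j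

/-- The longest permutation `w₀` (zero-based: `i ↦ i.rev = n - 1 - i`). -/
def w0 {n : ℕ} : Equiv.Perm (Fin n) := ⟨Fin.rev, Fin.rev, Fin.rev_rev, Fin.rev_rev⟩

/-- `(σ, τ)` is a good pair: `L_j(σ) ≥ L_j(τ)` and `L'_{σ(j)}(σ) ≥ L'_{τ(j)}(τ)` for all `j`. -/
def GoodPair {n : ℕ} (σ τ : Equiv.Perm (Fin n)) : Prop :=
  ∀ j : Fin n, LC τ j ≤ LC σ j ∧ LC' τ (τ j) ≤ LC' σ (σ j)

section
variable {n : ℕ}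

@[simp]
lemma w0_apply (j : Fin n) : (w0 : Equiv.Perm (Fin n)) j = j.rev := rfl

lemma inv_conj_w0 (w : Equiv.Perm (Fin n)) : (w0 * w * w0)⁻¹ = w0 * w⁻¹ * w0 := by
  ext j; rfl

/-- `w₀` reverses both positions and values, so inversions to the right of `j` in `w₀ w w₀` are
inversions to the left of `w₀ j` in `w`, i.e. values above `w (w₀ j)` at earlier positions. -/
lemma LC_conj_w0 (w : Equiv.Perm (Fin n)) (j : Fin n) :
    LC (w0 * w * w0) j = LC' w (w j.rev) := by
  unfold LC' LC
  refine card_bij' (fun k _ => w k.rev) (fun k _ => (w⁻¹ k).rev) ?_ ?_ ?_ ?_ <;>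
    simp +contextual [Fin.lt_rev_iff]

lemma LC'_conj_w0 (w : Equiv.Perm (Fin n)) (j : Fin n) :
    LC' (w0 * w * w0) ((w0 * w * w0 : Equiv.Perm (Fin n)) j) = LC w j.rev := by
  rw [LC', inv_conj_w0, LC_conj_w0, LC', inv_inv]
  simp

end

theorem good_pair_conj_w0 {n : ℕ} (σ τ : Equiv.Perm (Fin n))
    (h : GoodPair σ τ) : GoodPair (w0 * σ * w0) (w0 * τ * w0) := fun j =>
  ⟨by simpa only [LC_conj_w0] using (h j.rev).2, by simpa only [LC'_conj_w0] using (h j.rev).1⟩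
end

section
/- Let sigma be a permutation of {1,...,n} with sigma^{-1}(i) < sigma^{-1}(i+1) for some i in {1,...,n-1}, and set sigma' = s_i sigma (where s_i is the transposition of i and i+1, acting by left multiplication, i.e., swapping the values i and i+1 in the one-line notation of sigma). Then L_j(sigma') >= L_j(sigma) for all j in {1,...,n}. -/
open Finset

/-! Swapping the adjacent values `i` and `i + 1` preserves the relative order of every pair of
values except the pair `(i, i + 1)` itself. An inversion `k > j`, `σ k < σ j` counted by `L_j(σ)`
could only be lost if `σ k = i` and `σ j = i + 1`, which would put `σ⁻¹ i` after `σ⁻¹ (i + 1)`. -/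

theorem Fin.castSucc_covBy_succ {n : ℕ} (i : Fin n) : i.castSucc ⋖ i.succ :=
  ⟨castSucc_lt_succ, fun c h₁ h₂ => by simp only [lt_def, val_castSucc, val_succ] at h₁ h₂; omega⟩

theorem Equiv.swap_apply_lt_swap_apply_of_covBy {α : Type*} [LinearOrder α] {a b x y : α}
    (hab : a ⋖ b) (hxy : x < y) (hxy_ne : ¬(x = a ∧ y = b)) : swap a b x < swap a b y := by
  have hbetween : ∀ c, a < c → c < b → False := fun _ hac hcb => hab.2 hac hcb
  grind [hab.lt]

theorem lehmer_mono_swap {n : ℕ} (σ : Equiv.Perm (Fin (n + 1))) (i : Fin n)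
    (h : σ⁻¹ i.castSucc < σ⁻¹ i.succ) (j : Fin (n + 1)) :
    LC σ j ≤ LC (Equiv.swap i.castSucc i.succ * σ) j := by
  unfold LC
  refine card_le_card <| monotone_filter_right _ fun k _ ⟨hjk, hlt⟩ => ⟨hjk, ?_⟩
  refine Equiv.swap_apply_lt_swap_apply_of_covBy i.castSucc_covBy_succ hlt ?_
  rintro ⟨hk, hj⟩
  rw [← Equiv.Perm.eq_inv_iff_eq.mpr hk, ← Equiv.Perm.eq_inv_iff_eq.mpr hj] at h
  exact lt_asymm h hjk
end

section
/- Let sigma be a permutation of {1,...,n} with sigma^{-1}(i) < sigma^{-1}(i+1) for some i, and set sigma' = s_i sigma. If (sigma, tau) is a good pair of permutations with disjoint ascent sets, then (sigma', tau) is also a good pair with disjoint ascent sets. -/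
open Finset

/-- The ascent set of a permutation of `Fin (n+1)`: those `i` with `w i < w (i+1)`. -/
def Asc {n : ℕ} (w : Equiv.Perm (Fin (n + 1))) : Finset (Fin n) :=
  Finset.univ.filter (fun i => w i.castSucc < w i.succ)

/-!
When `i` precedes `i + 1` in `σ`, passing to `s_i σ` adds the single inversion
`(σ⁻¹ i, σ⁻¹ (i + 1))` and keeps every inversion of `σ`. Both `L_j(σ)` and `L'_{σ(j)}(σ)` count
inversions (those with left, resp. right, end `j`), so they can only grow, while a descent of `σ`
is an inversion at adjacent positions, so the ascent set can only shrink.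
-/

namespace Equiv

variable {α : Type*} [LinearOrder α] [DecidableEq α] {c s : α}

theorem swap_apply_lt_swap_apply_of_covBy_s14 (hcs : c ⋖ s) {x y : α} (hxy : x < y)
    (hne : ¬(x = c ∧ y = s)) : swap c s x < swap c s y := by
  have hle : ∀ {z}, c < z → s ≤ z := hcs.ge_of_gt
  have hge : ∀ {z}, z < s → z ≤ c := hcs.le_of_lt
  have hcs' := hcs.lt
  rcases eq_or_ne x c with rfl | hxc
  · have hsy : s < y := (hle hxy).lt_of_ne fun h => hne ⟨rfl, h.symm⟩
    rwa [swap_apply_left, swap_apply_of_ne_of_ne (hcs'.trans hsy).ne' hsy.ne']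
  rcases eq_or_ne x s with rfl | hxs
  · rw [swap_apply_right, swap_apply_of_ne_of_ne (hcs'.trans hxy).ne' hxy.ne']
    exact hcs'.trans hxy
  rw [swap_apply_of_ne_of_ne hxc hxs]
  rcases eq_or_ne y c with rfl | hyc
  · rw [swap_apply_left]; exact hxy.trans hcs'
  rcases eq_or_ne y s with rfl | hys
  · rw [swap_apply_right]; exact (hge hxy).lt_of_ne hxc
  rwa [swap_apply_of_ne_of_ne hyc hys]

theorem Perm.swap_mul_apply_lt_of_lt (hcs : c ⋖ s) {σ : Perm α} (h : σ⁻¹ c < σ⁻¹ s) {x y : α}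
    (hxy : x < y) (hσ : σ y < σ x) : (swap c s * σ) y < (swap c s * σ) x := by
  refine swap_apply_lt_swap_apply_of_covBy_s14 hcs hσ ?_
  rintro ⟨rfl, rfl⟩
  simp only [Perm.coe_inv, symm_apply_apply] at h
  exact h.not_gt hxy

end Equiv

theorem LC'_apply_self {n : ℕ} (w : Equiv.Perm (Fin n)) (j : Fin n) :
    LC' w (w j) = #{m | m < j ∧ w j < w m} := by
  rw [LC', LC, ← card_map w.toEmbedding (s := {m | m < j ∧ w j < w m})]
  congr 1
  ext k
  simp only [mem_filter, mem_univ, true_and, mem_map_equiv, Equiv.Perm.coe_inv,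
    Equiv.symm_apply_apply, Equiv.apply_symm_apply, and_comm]

section AdjacentSwap

variable {m : ℕ} {c s : Fin m} {σ : Equiv.Perm (Fin m)}

theorem LC_le_LC_swap_mul (hcs : c ⋖ s) (h : σ⁻¹ c < σ⁻¹ s) (j : Fin m) :
    LC σ j ≤ LC (Equiv.swap c s * σ) j :=
  card_le_card <| monotone_filter_right _ fun _ _ hk =>
    ⟨hk.1, Equiv.Perm.swap_mul_apply_lt_of_lt hcs h hk.1 hk.2⟩

theorem LC'_le_LC'_swap_mul (hcs : c ⋖ s) (h : σ⁻¹ c < σ⁻¹ s) (j : Fin m) :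
    LC' σ (σ j) ≤ LC' (Equiv.swap c s * σ) ((Equiv.swap c s * σ) j) := by
  rw [LC'_apply_self, LC'_apply_self]
  exact card_le_card <| monotone_filter_right _ fun _ _ hk =>
    ⟨hk.1, Equiv.Perm.swap_mul_apply_lt_of_lt hcs h hk.1 hk.2⟩

end AdjacentSwap

theorem Asc_swap_mul_subset {m : ℕ} {c s : Fin (m + 1)} {σ : Equiv.Perm (Fin (m + 1))}
    (hcs : c ⋖ s) (h : σ⁻¹ c < σ⁻¹ s) : Asc (Equiv.swap c s * σ) ⊆ Asc σ := by
  intro p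
  simp only [Asc, mem_filter, mem_univ, true_and]
  contrapose!
  intro hdesc
  have hdesc' : σ p.succ < σ p.castSucc :=
    hdesc.lt_of_ne (σ.injective.ne p.castSucc_lt_succ.ne')
  exact (Equiv.Perm.swap_mul_apply_lt_of_lt hcs h p.castSucc_lt_succ hdesc').le

theorem good_pair_swap {n : ℕ} (σ τ : Equiv.Perm (Fin (n + 1))) (i : Fin n)
    (h : σ⁻¹ i.castSucc < σ⁻¹ i.succ)
    (hgp : GoodPair σ τ) (hasc : Asc σ ∩ Asc τ = ∅) :
    GoodPair (Equiv.swap i.castSucc i.succ * σ) τ ∧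
      Asc (Equiv.swap i.castSucc i.succ * σ) ∩ Asc τ = ∅ := by
  have hcs : i.castSucc ⋖ i.succ := by simp
  refine ⟨fun j => ⟨(hgp j).1.trans (LC_le_LC_swap_mul hcs h j),
    (hgp j).2.trans (LC'_le_LC'_swap_mul hcs h j)⟩, ?_⟩
  exact subset_empty.1 (hasc ▸ inter_subset_inter_right (Asc_swap_mul_subset hcs h))
end

section
/- For n >= 1, the number of pairs (sigma, tau) of permutations of {1,...,n} such that (sigma, tau) is a good pair and A(sigma) ∩ A(tau) = ∅ is at least n!. -/
open Finset

/-- The ascent set of a permutation of `Fin n` (general `n`), as positions `i`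
with `i + 1 < n` and `w i < w (i+1)`. -/
def AscN {n : ℕ} (w : Equiv.Perm (Fin n)) : Finset (Fin n) :=
  Finset.univ.filter (fun i => ∃ h : (i : ℕ) + 1 < n, w i < w ⟨(i : ℕ) + 1, h⟩)

/-!
The reversal `w₀ = Fin.revPerm` has no ascents and dominates every permutation in both
conditions of a good pair: `L_j(w₀) = n - 1 - j` is the largest value any Lehmer code entry
can take at `j`, and `L'_{w₀(j)}(w₀) = j` while `L'_{τ(j)}(τ) ≤ j` for every `τ`.
Hence `τ ↦ (w₀, τ)` injects `S_n` into the set being counted.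
-/

lemma LC_revPerm {n : ℕ} (j : Fin n) : LC Fin.revPerm j = (j.rev : ℕ) := by
  have hfilter : univ.filter (fun k => j < k ∧ Fin.revPerm k < Fin.revPerm j) = Ioi j := by
    ext k
    simp [Fin.rev_lt_rev]
  rw [LC, hfilter, Fin.card_Ioi, Fin.val_rev]
  omega

lemma LC_le_rev {n : ℕ} (w : Equiv.Perm (Fin n)) (j : Fin n) : LC w j ≤ (j.rev : ℕ) := by
  rw [← LC_revPerm]
  exact card_le_card fun k hk => by
    simp only [mem_filter, mem_univ, true_and, Fin.revPerm_apply, Fin.rev_lt_rev] at hk ⊢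
    exact ⟨hk.1, hk.1⟩

lemma LC_le_apply {n : ℕ} (w : Equiv.Perm (Fin n)) (j : Fin n) : LC w j ≤ (w j : ℕ) := by
  rw [← Fin.card_Iio]
  refine card_le_card_of_injOn w (fun k hk => ?_) w.injective.injOn
  simp only [coe_filter, mem_univ, true_and, Set.mem_ofPred_eq] at hk
  simpa using hk.2

lemma LC'_apply_le {n : ℕ} (τ : Equiv.Perm (Fin n)) (j : Fin n) : LC' τ (τ j) ≤ (j : ℕ) := by
  simpa [LC'] using LC_le_apply τ⁻¹ (τ j)

lemma LC'_revPerm_apply {n : ℕ} (j : Fin n) : LC' Fin.revPerm (Fin.revPerm j) = (j : ℕ) := by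
  have hinv : (Fin.revPerm : Equiv.Perm (Fin n))⁻¹ = Fin.revPerm := rfl
  rw [LC', hinv, LC_revPerm, Fin.revPerm_apply, Fin.rev_rev]

lemma goodPair_revPerm_left {n : ℕ} (τ : Equiv.Perm (Fin n)) : GoodPair Fin.revPerm τ :=
  fun j => ⟨(LC_le_rev τ j).trans (LC_revPerm j).ge,
    (LC'_apply_le τ j).trans (LC'_revPerm_apply j).ge⟩

lemma ascN_revPerm (n : ℕ) : AscN (Fin.revPerm : Equiv.Perm (Fin n)) = ∅ := by
  ext i
  simp only [AscN, mem_filter, mem_univ, true_and, notMem_empty, iff_false, not_exists,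
    Fin.revPerm_apply, Fin.rev_lt_rev]
  intro _ hlt
  simp [Fin.lt_def] at hlt

theorem factorial_le_good_falling_pairs_general (n : ℕ) :
    n.factorial ≤
      {p : Equiv.Perm (Fin n) × Equiv.Perm (Fin n) |
        GoodPair p.1 p.2 ∧ AscN p.1 ∩ AscN p.2 = ∅}.ncard := by
  have hcard : (Set.univ : Set (Equiv.Perm (Fin n))).ncard = n.factorial := by
    rw [Set.ncard_univ, Nat.card_eq_fintype_card, Fintype.card_perm, Fintype.card_fin]
  rw [← hcard]
  refine Set.ncard_le_ncard_of_injOn (fun τ => (Fin.revPerm, τ)) (fun τ _ => ?_)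
    (fun a _ b _ h => congrArg Prod.snd h)
  exact ⟨goodPair_revPerm_left τ, by simp [ascN_revPerm]⟩

theorem factorial_le_good_falling_pairs (n : ℕ) (hn : 1 ≤ n) :
    n.factorial ≤
      {p : Equiv.Perm (Fin n) × Equiv.Perm (Fin n) |
        GoodPair p.1 p.2 ∧ AscN p.1 ∩ AscN p.2 = ∅}.ncard :=
  factorial_le_good_falling_pairs_general n
end

section
/- Fix n and i with 2 <= i <= n-1. The number of permutations u of {1,...,n} satisfying all three conditions: (1) u(n-i) < u(n-i+k) for some k >= 2, (2) u(n-i+1) > u(n-i+1-k) for some k >= 2, and (3) u(n-i) > u(n-i+1), equals n!/((n-i)(n-i+1)) + n!/(i(i+1)) + n!/(i(n-i)) + n!/2 - n!/i - n!/(n-i) - (i-1)!(n-1-i)!. -/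
/-!
Write `m = n - i` and let `a = m - 1`, `b = m` be the two adjacent positions (0-indexed), so that
conditions (1), (2), (3) read `A : ∃ q > b, u a < u q`, `B : ∃ q < a, u q < u b`, `C : u b < u a`.
Inclusion–exclusion inside `C` gives
`#(A ∧ B ∧ C) = #C - #(C ∧ ¬A) - #(C ∧ ¬B) + #(¬A ∧ ¬B) - #(¬A ∧ ¬B ∧ ¬C)`.
Each term is a statement that prescribed positions carry the extreme values of prescribed blocks:
`C ∧ ¬A` says `u a` is the largest value on `[a, n)` (`i + 1` positions), `C ∧ ¬B` that `u b` is
the smallest on `[0, b]` (`m + 1` positions), `¬A ∧ ¬B` that `u a` is the largest on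
`{a} ∪ (b, n)` and `u b` the smallest on the complementary block. Right-multiplying by a
transposition inside a block moves the position of its maximum bijectively, so the position of
the maximum is uniformly distributed, also conditionally on any event invariant under these
transpositions; hence the counts `n!/2`, `n!/(i+1)`, `n!/(m+1)`, `n!/(i m)`. Finally `¬A ∧ ¬B ∧ ¬C`
forces every value on `{a} ∪ (b, n)` below every value on its complement; there are `i! m!` such
permutations, and a fraction `1/(i m)` of them has the extremes at `a` and `b`.
-/

open Finset Equiv Nat

section Extremal

variable {α β : Type*} [DecidableEq α]

theorem swap_apply_mem_iff {A : Finset α} {a c x : α} (ha : a ∈ A ↔ c ∈ A) :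
    swap a c x ∈ A ↔ x ∈ A := by
  rcases eq_or_ne x a with rfl | hxa
  · simpa using ha.symm
  rcases eq_or_ne x c with rfl | hxc
  · simpa using ha
  rw [swap_apply_of_ne_of_ne hxa hxc]

theorem swap_trans_apply_of_notMem {Q : Finset α} {c d : α} (hc : c ∉ Q) (hd : d ∉ Q)
    (u : α ≃ β) : ∀ x ∈ Q, (swap c d).trans u x = u x := fun x hx => by
  rw [trans_apply,
    swap_apply_of_ne_of_ne (ne_of_mem_of_not_mem hx hc) (ne_of_mem_of_not_mem hx hd)]

theorem forall_lt_swap_trans_iff [LinearOrder β] {A : Finset α} {c d : α} (h : c ∈ A ↔ d ∈ A)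
    (u : α ≃ β) :
    (∀ x ∈ A, ∀ y ∉ A, (swap c d).trans u x < (swap c d).trans u y) ↔
      ∀ x ∈ A, ∀ y ∉ A, u x < u y := by
  have hs : ∀ {x}, swap c d x ∈ A ↔ x ∈ A := swap_apply_mem_iff h
  refine ⟨fun H x hx y hy => ?_, fun H x hx y hy => H _ (hs.mpr hx) _ (mt hs.mp hy)⟩
  simpa using H _ (hs.mpr hx) _ (mt hs.mp hy)

variable [Fintype α] [Fintype β] [LinearOrder β]

theorem card_filter_forall_le_and_mul_card {P : Finset α} {a : α} (ha : a ∈ P)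
    (R : (α ≃ β) → Prop) [DecidablePred R]
    (hR : ∀ u, ∀ c ∈ P, R ((swap a c).trans u) ↔ R u) :
    #{u : α ≃ β | (∀ x ∈ P, u x ≤ u a) ∧ R u} * #P = #{u : α ≃ β | R u} := by
  set S : α → Finset (α ≃ β) := fun c => {u | (∀ x ∈ P, u x ≤ u c) ∧ R u}
  have hunion : ({u | R u} : Finset (α ≃ β)) = P.biUnion S := by
    ext u
    simp only [mem_filter, mem_univ, true_and, mem_biUnion, S]
    refine ⟨fun hu => ?_, fun ⟨_, _, _, hu⟩ => hu⟩
    obtain ⟨c, hc, hmax⟩ := P.exists_max_image u ⟨a, ha⟩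
    exact ⟨c, hc, hmax, hu⟩
  have hdisj : (P : Set α).PairwiseDisjoint S := by
    intro c hc d hd hcd
    refine disjoint_left.mpr fun u huc hud => hcd (u.injective ?_)
    simp only [mem_filter, S] at huc hud
    exact le_antisymm (hud.2.1 c hc) (huc.2.1 d hd)
  have hcard : ∀ c ∈ P, #(S c) = #(S a) := by
    intro c hc
    have hP : ∀ {x}, swap a c x ∈ P ↔ x ∈ P := swap_apply_mem_iff (iff_of_true ha hc)
    refine card_equiv (equivCongr (swap a c) (Equiv.refl β)) fun u => ?_
    have he : equivCongr (swap a c) (Equiv.refl β) u = (swap a c).trans u := by ext; simp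
    simp only [mem_filter, mem_univ, true_and, S, he, hR u c hc, Equiv.trans_apply,
      swap_apply_left]
    refine and_congr_left' ⟨fun h x hx => h _ (hP.mpr hx), fun h x hx => ?_⟩
    simpa using h _ (hP.mpr hx)
  rw [hunion, card_biUnion hdisj, sum_congr rfl hcard, sum_const, smul_eq_mul, mul_comm]

theorem card_filter_forall_ge_and_mul_card {P : Finset α} {a : α} (ha : a ∈ P)
    (R : (α ≃ β) → Prop) [DecidablePred R]
    (hR : ∀ u, ∀ c ∈ P, R ((swap a c).trans u) ↔ R u) :
    #{u : α ≃ β | (∀ x ∈ P, u a ≤ u x) ∧ R u} * #P = #{u : α ≃ β | R u} := by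
  let e : (α ≃ β) ≃ (α ≃ βᵒᵈ) := equivCongr (Equiv.refl α) OrderDual.toDual
  have hsymm : ∀ u, e.symm (e u) = u := e.symm_apply_apply
  rw [card_equiv e (t := {v | (∀ x ∈ P, v x ≤ v a) ∧ R (e.symm v)}) fun u => by
      simp only [mem_filter, mem_univ, true_and, hsymm]; simp [e],
    card_equiv e (t := {v | R (e.symm v)}) fun u => by
      simp only [mem_filter, mem_univ, true_and, hsymm]]
  exact card_filter_forall_le_and_mul_card ha _ fun u c hc => hR (e.symm u) c hc

end Extremal

section Separation

variable {α : Type*} [Fintype α] [DecidableEq α]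

def Equiv.Perm.subtypeIffEquivProd (p q : α → Prop) [DecidablePred p] [DecidablePred q] :
    {u : Perm α // ∀ x, p x ↔ q (u x)} ≃
      ({x // p x} ≃ {x // q x}) × ({x // ¬p x} ≃ {x // ¬q x}) where
  toFun u := (u.1.subtypeEquiv u.2, u.1.subtypeEquiv fun x => not_congr (u.2 x))
  invFun ef := ⟨Equiv.subtypeCongr ef.1 ef.2, fun x => by
    by_cases hx : p x
    · simpa [Equiv.subtypeCongr, sumCompl_symm_apply_of_pos, hx] using (ef.1 ⟨x, hx⟩).2
    · simpa [Equiv.subtypeCongr, sumCompl_symm_apply_of_neg, hx] using (ef.2 ⟨x, hx⟩).2⟩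
  left_inv u := by
    ext x
    by_cases hx : p x <;>
      simp [Equiv.subtypeCongr, sumCompl_symm_apply_of_pos, sumCompl_symm_apply_of_neg, hx]
  right_inv ef := by
    ext x <;> simp [Equiv.subtypeCongr, sumCompl_symm_apply_of_pos, sumCompl_symm_apply_of_neg, x.2]

theorem card_filter_perm_forall_iff (p q : α → Prop) [DecidablePred p] [DecidablePred q]
    (h : #{x | p x} = #{x | q x}) :
    #{u : Perm α | ∀ x, p x ↔ q (u x)} =
      (#{x | p x})! * (Fintype.card α - #{x | p x})! := by
  have hp : Fintype.card {x // p x} = Fintype.card {x // q x} := by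
    simpa [Fintype.card_subtype] using h
  have hnp : Fintype.card {x // ¬p x} = Fintype.card {x // ¬q x} := by
    rw [Fintype.card_subtype_compl, Fintype.card_subtype_compl, hp]
  rw [← Fintype.card_subtype, Fintype.card_congr (Perm.subtypeIffEquivProd p q),
    Fintype.card_prod, Fintype.card_equiv (Fintype.equivOfCardEq hp),
    Fintype.card_equiv (Fintype.equivOfCardEq hnp),
    Fintype.card_subtype_compl, Fintype.card_subtype]

omit [Fintype α] in
theorem forall_lt_iff_val_lt_card {N : ℕ} (A : Finset α) (u : α ≃ Fin N) :
    (∀ x ∈ A, ∀ y ∉ A, u x < u y) ↔ ∀ x, x ∈ A ↔ (u x : ℕ) < #A := by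
  constructor
  · intro h x
    by_cases hx : x ∈ A
    · suffices Iio (u x) ⊆ (A.erase x).map u.toEmbedding by
        have := card_le_card this
        rw [Fin.card_Iio, card_map, card_erase_of_mem hx] at this
        have := card_pos.mpr ⟨x, hx⟩
        simp only [hx, true_iff]; omega
      intro v hv
      rw [mem_Iio] at hv
      refine mem_map_equiv.mpr (mem_erase.mpr ⟨fun hvx => ?_, ?_⟩)
      · simp [← hvx] at hv
      · by_contra hA
        exact (h x hx _ hA).not_gt (by simpa using hv)
    · suffices A.map u.toEmbedding ⊆ Iio (u x) by
        have := card_le_card this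
        rw [Fin.card_Iio, card_map] at this
        simp only [hx, false_iff, not_lt]; omega
      intro v hv
      obtain ⟨y, hy, rfl⟩ := mem_map.mp hv
      exact mem_Iio.mpr (h y hy x hx)
  · intro h x hx y hy
    rw [Fin.lt_def]
    exact ((h x).mp hx).trans_le (not_lt.mp ((h y).not.mp hy))

end Separation

section Perm

variable {α : Type*} [Fintype α] [LinearOrder α]

theorem card_filter_forall_le_mul_card {P : Finset α} {a : α} (ha : a ∈ P) :
    #{u : Perm α | ∀ x ∈ P, u x ≤ u a} * #P = (Fintype.card α)! := by
  simpa [Fintype.card_perm] using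
    card_filter_forall_le_and_mul_card (β := α) ha (fun _ => True) (by simp)

theorem card_filter_forall_ge_mul_card {P : Finset α} {a : α} (ha : a ∈ P) :
    #{u : Perm α | ∀ x ∈ P, u a ≤ u x} * #P = (Fintype.card α)! := by
  simpa [Fintype.card_perm] using
    card_filter_forall_ge_and_mul_card (β := α) ha (fun _ => True) (by simp)

theorem card_filter_apply_lt_apply_mul_two {a b : α} (hab : a ≠ b) :
    #{u : Perm α | u b < u a} * 2 = (Fintype.card α)! := by
  have hiff : ∀ u : Perm α, (∀ x ∈ ({a, b} : Finset α), u x ≤ u a) ↔ u b < u a := fun u => by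
    simp [(u.injective.ne hab.symm).le_iff_lt]
  have h := card_filter_forall_le_mul_card (mem_insert_self a {b})
  rwa [card_pair hab, filter_congr fun u _ => hiff u] at h

theorem card_filter_forall_le_and_forall_ge_mul {P Q : Finset α} (hPQ : Disjoint P Q) {a b : α}
    (ha : a ∈ P) (hb : b ∈ Q) :
    #{u : Perm α | (∀ x ∈ P, u x ≤ u a) ∧ ∀ y ∈ Q, u b ≤ u y} * (#P * #Q) =
      (Fintype.card α)! := by
  rw [← mul_assoc, card_filter_forall_le_and_mul_card ha (fun u : Perm α => ∀ y ∈ Q, u b ≤ u y)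
    fun u c hc => ?_, card_filter_forall_ge_mul_card hb]
  have hfix := swap_trans_apply_of_notMem (disjoint_left.mp hPQ ha) (disjoint_left.mp hPQ hc) u
  rw [hfix b hb]
  exact forall₂_congr fun y hy => by rw [hfix y hy]

theorem card_filter_forall_lt_of_mem_of_notMem (A : Finset α) :
    #{u : Perm α | ∀ x ∈ A, ∀ y ∉ A, u x < u y} = (#A)! * (Fintype.card α - #A)! := by
  let e := (Fintype.orderIsoFinOfCardEq α rfl).symm
  have hk : #{v | (e v : ℕ) < #A} = #A := by
    rw [card_equiv e.toEquiv (t := ({j | (j : ℕ) < #A} : Finset (Fin (Fintype.card α))))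
      (by simp), Fin.card_filter_val_lt, min_eq_right (card_le_univ A)]
  have hsep : ∀ u : Perm α,
      (∀ x ∈ A, ∀ y ∉ A, u x < u y) ↔ ∀ x, x ∈ A ↔ (e (u x) : ℕ) < #A := fun u =>
    (forall₂_congr fun x _ => forall₂_congr fun y _ => e.lt_iff_lt.symm).trans
      (forall_lt_iff_val_lt_card A (u.trans e.toEquiv))
  rw [filter_congr fun u _ => hsep u,
    card_filter_perm_forall_iff (· ∈ A) (fun v => (e v : ℕ) < #A) (by simpa using hk.symm)]
  simp

theorem card_filter_forall_le_and_forall_ge_and_forall_lt_mul {A : Finset α} {a b : α}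
    (ha : a ∈ A) (hb : b ∉ A) :
    #{u : Perm α | (∀ x ∈ A, u x ≤ u a) ∧ (∀ y ∈ Aᶜ, u b ≤ u y) ∧
        ∀ x ∈ A, ∀ y ∉ A, u x < u y} * (#A * #Aᶜ) = (#A)! * (Fintype.card α - #A)! := by
  rw [← mul_assoc, card_filter_forall_le_and_mul_card ha
    (fun u : Perm α => (∀ y ∈ Aᶜ, u b ≤ u y) ∧ ∀ x ∈ A, ∀ y ∉ A, u x < u y) fun u c hc => ?_]
  · rw [card_filter_forall_ge_and_mul_card (mem_compl.mpr hb)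
      (fun u : Perm α => ∀ x ∈ A, ∀ y ∉ A, u x < u y) fun u c hc => ?_,
      card_filter_forall_lt_of_mem_of_notMem]
    exact forall_lt_swap_trans_iff (iff_of_false hb (mem_compl.mp hc)) u
  · have hfix := swap_trans_apply_of_notMem (notMem_compl.mpr ha) (notMem_compl.mpr hc) u
    rw [forall_lt_swap_trans_iff (iff_of_true ha hc) u, hfix b (mem_compl.mpr hb)]
    exact and_congr_left' (forall₂_congr fun y hy => by rw [hfix y hy])

end Perm

theorem card_filter_inclusion_exclusion {ι : Type*} [Fintype ι] (p q r : ι → Prop)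
    [DecidablePred p] [DecidablePred q] [DecidablePred r] :
    #{x | p x ∧ q x ∧ r x} + #{x | r x ∧ ¬p x} + #{x | r x ∧ ¬q x} +
        #{x | ¬p x ∧ ¬q x ∧ ¬r x} = #{x | r x} + #{x | ¬p x ∧ ¬q x} := by
  simp only [card_filter, ← sum_add_distrib]
  refine sum_congr rfl fun x _ => ?_
  by_cases hp : p x <;> by_cases hq : q x <;> by_cases hr : r x <;> simp [hp, hq, hr]

section Descent

variable {α : Type*} [Fintype α] [LinearOrder α] {a b : α} {i m : ℕ}

omit [Fintype α] in
theorem CovBy.left_lt_iff (hab : a ⋖ b) {x : α} : a < x ↔ b ≤ x :=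
  ⟨hab.ge_of_gt, hab.lt.trans_le⟩

omit [Fintype α] in
theorem CovBy.lt_right_iff (hab : a ⋖ b) {x : α} : x < b ↔ x ≤ a :=
  ⟨hab.le_of_lt, fun h => h.trans_lt hab.lt⟩

theorem card_filter_ge_eq_succ (hab : a ⋖ b) (hi : #{x | b ≤ x} = i) :
    #{x | a ≤ x} = i + 1 := by
  rw [← hi, ← card_insert_of_notMem (s := {x | b ≤ x}) (by simpa using hab.lt)]
  congr 1; ext x
  simp [le_iff_eq_or_lt (a := a), hab.left_lt_iff, eq_comm]

theorem card_filter_le_eq_succ (hab : a ⋖ b) (hm : #{x | x ≤ a} = m) :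
    #{x | x ≤ b} = m + 1 := by
  rw [← hm, ← card_insert_of_notMem (s := {x | x ≤ a}) (by simpa using hab.lt)]
  congr 1; ext x
  simp [le_iff_eq_or_lt (b := b), hab.lt_right_iff]

def insertAbove (a b : α) : Finset α := {x | x = a ∨ b < x}

theorem mem_insertAbove {x : α} : x ∈ insertAbove a b ↔ x = a ∨ b < x := by
  simp [insertAbove]

theorem mem_compl_insertAbove (hab : a ⋖ b) {x : α} :
    x ∈ (insertAbove a b)ᶜ ↔ x < a ∨ x = b := by
  rw [mem_compl, mem_insertAbove, not_or, not_lt, le_iff_lt_or_eq, hab.lt_right_iff,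
    le_iff_lt_or_eq (b := a)]
  constructor
  · rintro ⟨hxa, (h | h) | h⟩ <;> tauto
  · rintro (h | rfl)
    · exact ⟨h.ne, Or.inl (Or.inl h)⟩
    · exact ⟨hab.lt.ne', Or.inr rfl⟩

theorem card_insertAbove (hab : a ⋖ b) (hi : #{x | b ≤ x} = i) : #(insertAbove a b) = i := by
  suffices #{x | a ≤ x} = #(insertAbove a b) + 1 by
    rw [card_filter_ge_eq_succ hab hi] at this; omega
  rw [← card_insert_of_notMem (a := b) (by simp [mem_insertAbove, hab.lt.ne'])]
  congr 1; ext x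
  rw [mem_filter, mem_insert, mem_insertAbove, le_iff_eq_or_lt, hab.left_lt_iff,
    le_iff_eq_or_lt (a := b)]
  simp only [mem_univ, true_and]
  tauto

theorem card_compl_insertAbove (hab : a ⋖ b) (hm : #{x | x ≤ a} = m) :
    #(insertAbove a b)ᶜ = m := by
  suffices #{x | x ≤ b} = #(insertAbove a b)ᶜ + 1 by
    rw [card_filter_le_eq_succ hab hm] at this; omega
  rw [← card_insert_of_notMem (a := a) (by simp [mem_insertAbove])]
  congr 1; ext x
  rw [mem_filter, mem_insert, mem_compl_insertAbove hab, le_iff_eq_or_lt, hab.lt_right_iff,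
    le_iff_eq_or_lt (b := a)]
  simp only [mem_univ, true_and]
  tauto

theorem lt_and_not_exists_gt_iff (hab : a ⋖ b) (u : Perm α) :
    (u b < u a ∧ ¬∃ q, b < q ∧ u a < u q) ↔ ∀ x ∈ ({x | a ≤ x} : Finset α), u x ≤ u a := by
  simp only [mem_filter, mem_univ, true_and, not_exists, not_and, not_lt]
  constructor
  · rintro ⟨hba, hmax⟩ x hax
    rcases hax.eq_or_lt with rfl | hax
    · exact le_rfl
    rcases (hab.left_lt_iff.mp hax).eq_or_lt with rfl | hbx
    · exact hba.le
    · exact hmax x hbx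
  · intro hmax
    refine ⟨(hmax b hab.le).lt_of_ne (u.injective.ne hab.lt.ne'), fun q hbq => hmax q ?_⟩
    exact hab.le.trans hbq.le

theorem lt_and_not_exists_lt_iff (hab : a ⋖ b) (u : Perm α) :
    (u b < u a ∧ ¬∃ q, q < a ∧ u q < u b) ↔ ∀ x ∈ ({x | x ≤ b} : Finset α), u b ≤ u x := by
  simp only [mem_filter, mem_univ, true_and, not_exists, not_and, not_lt]
  constructor
  · rintro ⟨hba, hmin⟩ x hxb
    rcases hxb.eq_or_lt with rfl | hxb
    · exact le_rfl
    rcases (hab.lt_right_iff.mp hxb).eq_or_lt with rfl | hxa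
    · exact hba.le
    · exact hmin x hxa
  · intro hmin
    refine ⟨(hmin a hab.le).lt_of_ne (u.injective.ne hab.lt.ne'), fun q hqa => hmin q ?_⟩
    exact hqa.le.trans hab.le

theorem not_exists_gt_and_not_exists_lt_iff (hab : a ⋖ b) (u : Perm α) :
    (¬(∃ q, b < q ∧ u a < u q) ∧ ¬∃ q, q < a ∧ u q < u b) ↔
      (∀ x ∈ insertAbove a b, u x ≤ u a) ∧ ∀ y ∈ (insertAbove a b)ᶜ, u b ≤ u y := by
  simp only [mem_insertAbove, mem_compl_insertAbove hab, forall_eq, le_rfl,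
    true_and, not_exists, not_and, not_lt, or_imp, forall_and]
  tauto

theorem not_lt_iff_forall_lt (hab : a ⋖ b) {u : Perm α}
    (hmax : ∀ x ∈ insertAbove a b, u x ≤ u a) (hmin : ∀ y ∈ (insertAbove a b)ᶜ, u b ≤ u y) :
    ¬u b < u a ↔ ∀ x ∈ insertAbove a b, ∀ y ∉ insertAbove a b, u x < u y := by
  have hb : b ∉ insertAbove a b := by simp [mem_insertAbove, hab.lt.ne']
  refine ⟨fun h x hx y hy => ?_,
    fun h => not_lt.mpr (h a (mem_insertAbove.mpr (.inl rfl)) b hb).le⟩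
  have hab' : u a < u b := (not_lt.mp h).lt_of_ne (u.injective.ne hab.lt.ne)
  exact (hmax x hx).trans_lt (hab'.trans_le (hmin y (mem_compl.mpr hy)))

theorem card_filter_lt_and_not_exists_gt_mul (hab : a ⋖ b) (hi : #{x | b ≤ x} = i) :
    #{u : Perm α | u b < u a ∧ ¬∃ q, b < q ∧ u a < u q} * (i + 1) = (Fintype.card α)! := by
  rw [filter_congr fun u _ => lt_and_not_exists_gt_iff hab u, ← card_filter_ge_eq_succ hab hi]
  exact card_filter_forall_le_mul_card (by simp)

theorem card_filter_lt_and_not_exists_lt_mul (hab : a ⋖ b) (hm : #{x | x ≤ a} = m) :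
    #{u : Perm α | u b < u a ∧ ¬∃ q, q < a ∧ u q < u b} * (m + 1) = (Fintype.card α)! := by
  rw [filter_congr fun u _ => lt_and_not_exists_lt_iff hab u, ← card_filter_le_eq_succ hab hm]
  exact card_filter_forall_ge_mul_card (by simp)

theorem card_filter_not_exists_gt_and_not_exists_lt_mul (hab : a ⋖ b) (hi : #{x | b ≤ x} = i)
    (hm : #{x | x ≤ a} = m) :
    #{u : Perm α | ¬(∃ q, b < q ∧ u a < u q) ∧ ¬∃ q, q < a ∧ u q < u b} * (i * m) =
      (Fintype.card α)! := by
  rw [filter_congr fun u _ => not_exists_gt_and_not_exists_lt_iff hab u,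
    ← card_insertAbove hab hi, ← card_compl_insertAbove hab hm]
  exact card_filter_forall_le_and_forall_ge_mul disjoint_compl_right
    (mem_insertAbove.mpr (.inl rfl)) ((mem_compl_insertAbove hab).mpr (.inr rfl))

theorem card_filter_not_exists_gt_and_not_exists_lt_and_not_lt (hab : a ⋖ b)
    (hi : #{x | b ≤ x} = i) (hm : #{x | x ≤ a} = m) :
    #{u : Perm α | ¬(∃ q, b < q ∧ u a < u q) ∧ (¬∃ q, q < a ∧ u q < u b) ∧ ¬u b < u a} =
      (i - 1)! * (m - 1)! := by
  have ha : a ∈ insertAbove a b := mem_insertAbove.mpr (.inl rfl)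
  have hb : b ∈ (insertAbove a b)ᶜ := (mem_compl_insertAbove hab).mpr (.inr rfl)
  have hiff : ∀ u : Perm α,
      (¬(∃ q, b < q ∧ u a < u q) ∧ (¬∃ q, q < a ∧ u q < u b) ∧ ¬u b < u a) ↔
        (∀ x ∈ insertAbove a b, u x ≤ u a) ∧ (∀ y ∈ (insertAbove a b)ᶜ, u b ≤ u y) ∧
          ∀ x ∈ insertAbove a b, ∀ y ∉ insertAbove a b, u x < u y := fun u => by
    rw [← and_assoc, not_exists_gt_and_not_exists_lt_iff hab u]
    exact ⟨fun ⟨⟨hmax, hmin⟩, h⟩ => ⟨hmax, hmin, (not_lt_iff_forall_lt hab hmax hmin).mp h⟩,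
      fun ⟨hmax, hmin, h⟩ => ⟨⟨hmax, hmin⟩, (not_lt_iff_forall_lt hab hmax hmin).mpr h⟩⟩
  have h := card_filter_forall_le_and_forall_ge_and_forall_lt_mul ha (mem_compl.mp hb)
  have hi0 : i ≠ 0 := card_insertAbove hab hi ▸ (card_pos.mpr ⟨a, ha⟩).ne'
  have hm0 : m ≠ 0 := card_compl_insertAbove hab hm ▸ (card_pos.mpr ⟨b, hb⟩).ne'
  rw [← card_add_card_compl (insertAbove a b), add_tsub_cancel_left, card_insertAbove hab hi,
    card_compl_insertAbove hab hm, ← filter_congr fun u _ => hiff u, ← mul_factorial_pred hi0,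
    ← mul_factorial_pred hm0] at h
  apply Nat.eq_of_mul_eq_mul_right (Nat.pos_of_ne_zero (mul_ne_zero hi0 hm0))
  rw [h]; ring

theorem cast_ncard_descent_exists_gt_exists_lt (hab : a ⋖ b) (hi : #{x | b ≤ x} = i)
    (hm : #{x | x ≤ a} = m) :
    ({u : Perm α | (∃ q, b < q ∧ u a < u q) ∧ (∃ q, q < a ∧ u q < u b) ∧ u b < u a}.ncard : ℚ) =
      (Fintype.card α)! / 2 - (Fintype.card α)! / (i + 1) - (Fintype.card α)! / (m + 1) +
        (Fintype.card α)! / (i * m) - (i - 1)! * (m - 1)! := by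
  have hIE := card_filter_inclusion_exclusion (fun u : Perm α => ∃ q, b < q ∧ u a < u q)
    (fun u => ∃ q, q < a ∧ u q < u b) (fun u => u b < u a)
  rw [card_filter_not_exists_gt_and_not_exists_lt_and_not_lt hab hi hm] at hIE
  have hi0 : (i : ℚ) ≠ 0 := by
    rw [← hi]; exact_mod_cast (card_pos.mpr ⟨b, by simp⟩).ne'
  have hm0 : (m : ℚ) ≠ 0 := by
    rw [← hm]; exact_mod_cast (card_pos.mpr ⟨a, by simp⟩).ne'
  have hC : (#{u : Perm α | u b < u a} : ℚ) = (Fintype.card α)! / 2 := by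
    rw [eq_div_iff two_ne_zero]; exact_mod_cast card_filter_apply_lt_apply_mul_two hab.lt.ne
  have hCA : (#{u : Perm α | u b < u a ∧ ¬∃ q, b < q ∧ u a < u q} : ℚ) =
      (Fintype.card α)! / (i + 1) := by
    rw [eq_div_iff (by positivity)]; exact_mod_cast card_filter_lt_and_not_exists_gt_mul hab hi
  have hCB : (#{u : Perm α | u b < u a ∧ ¬∃ q, q < a ∧ u q < u b} : ℚ) =
      (Fintype.card α)! / (m + 1) := by
    rw [eq_div_iff (by positivity)]; exact_mod_cast card_filter_lt_and_not_exists_lt_mul hab hm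
  have hD : (#{u : Perm α | ¬(∃ q, b < q ∧ u a < u q) ∧ ¬∃ q, q < a ∧ u q < u b} : ℚ) =
      (Fintype.card α)! / (i * m) := by
    rw [eq_div_iff (mul_ne_zero hi0 hm0)]
    exact_mod_cast card_filter_not_exists_gt_and_not_exists_lt_mul hab hi hm
  rw [Set.ncard_eq_toFinset_card', Set.toFinset_ofPred]
  have hIE' := congrArg (Nat.cast : ℕ → ℚ) hIE
  push_cast at hIE'
  linear_combination hIE' + hC + hD - hCA - hCB

end Descent

theorem Fin.setOf_exists_val_eq {n k : ℕ} {a b : Fin n} (hab : a ⋖ b) (hb : (b : ℕ) = k) :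
    {u : Perm (Fin n) | (∃ q : Fin n, k + 1 ≤ (q : ℕ) ∧ u a < u q) ∧
        (∃ q : Fin n, (q : ℕ) ≤ k - 2 ∧ u q < u b) ∧ u b < u a} =
      {u | (∃ q, b < q ∧ u a < u q) ∧ (∃ q, q < a ∧ u q < u b) ∧ u b < u a} := by
  have hab' : (a : ℕ) + 1 = b := by simpa using hab
  -- for `k = 1` the bound `k - 2` truncates to `0`, and `q = 0 = a` is excluded by `u b < u a`
  ext u
  refine and_congr (exists_congr fun q => and_congr_left' ?_) ⟨?_, ?_⟩
  · rw [Fin.lt_def]; omega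
  · rintro ⟨⟨q, hq, hlt⟩, hC⟩
    refine ⟨⟨q, ?_, hlt⟩, hC⟩
    rcases eq_or_ne q a with rfl | hqa
    · exact absurd hC (asymm hlt)
    · have := Fin.val_ne_of_ne hqa
      rw [Fin.lt_def]; omega
  · rintro ⟨⟨q, hq, hlt⟩, hC⟩
    rw [Fin.lt_def] at hq
    exact ⟨⟨q, by omega, hlt⟩, hC⟩

theorem Nat.mul_succ_dvd_factorial {k n : ℕ} (hk : 0 < k) (hkn : k < n) : k * (k + 1) ∣ n ! := by
  have : k * (k + 1) ∣ (k + 1)! := by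
    rw [factorial_succ, mul_comm]; exact mul_dvd_mul_left _ (dvd_factorial hk le_rfl)
  exact this.trans (factorial_dvd_factorial hkn)

theorem Nat.mul_dvd_factorial_add {i m : ℕ} (hi : 0 < i) (hm : 0 < m) : i * m ∣ (i + m)! :=
  (mul_dvd_mul (dvd_factorial hi le_rfl) (dvd_factorial hm le_rfl)).trans
    (factorial_mul_factorial_dvd_factorial_add i m)

theorem cast_factorial_div_add_eq {n i m : ℕ} (hi : 0 < i) (hm : 0 < m) (hn : i + m = n) :
    ((n ! / (m * (m + 1)) : ℕ) : ℚ) + (n ! / (i * (i + 1)) : ℕ) + (n ! / (i * m) : ℕ) +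
        (n ! / 2 : ℕ) - (n ! / i : ℕ) - (n ! / m : ℕ) =
      n ! / 2 - n ! / (i + 1) - n ! / (m + 1) + n ! / (i * m) := by
  subst hn
  rw [Nat.cast_div_charZero (Nat.mul_succ_dvd_factorial hm (by omega)),
    Nat.cast_div_charZero (Nat.mul_succ_dvd_factorial hi (by omega)),
    Nat.cast_div_charZero (Nat.mul_dvd_factorial_add hi hm),
    Nat.cast_div_charZero (dvd_factorial two_pos (by omega)),
    Nat.cast_div_charZero (dvd_factorial hi (by omega)),
    Nat.cast_div_charZero (dvd_factorial hm (by omega))]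
  have hi0 : (i : ℚ) ≠ 0 := by positivity
  have hm0 : (m : ℚ) ≠ 0 := by positivity
  push_cast
  field_simp
  ring

theorem count_ABC (n i : ℕ) (h2 : 2 ≤ i) (hn : i ≤ n - 1) :
    ({u : Equiv.Perm (Fin n) |
        (∃ q : Fin n, n - i + 1 ≤ (q : ℕ) ∧ u ⟨n - i - 1, by omega⟩ < u q) ∧
        (∃ q : Fin n, (q : ℕ) ≤ n - i - 2 ∧ u q < u ⟨n - i, by omega⟩) ∧
        u ⟨n - i, by omega⟩ < u ⟨n - i - 1, by omega⟩}.ncard : ℤ) =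
      (n.factorial / ((n - i) * (n - i + 1)) : ℕ) + (n.factorial / (i * (i + 1)) : ℕ) +
        (n.factorial / (i * (n - i)) : ℕ) + (n.factorial / 2 : ℕ) -
        (n.factorial / i : ℕ) - (n.factorial / (n - i) : ℕ) -
        ((i - 1).factorial * (n - 1 - i).factorial : ℕ) := by
  set a : Fin n := ⟨n - i - 1, by omega⟩
  set b : Fin n := ⟨n - i, by omega⟩
  have hab : a ⋖ b := by simp only [Fin.covBy_iff, Nat.covBy_iff_add_one_eq, a, b]; omega
  have hi : #{x | b ≤ x} = i := by rw [filter_le_eq_Ici, Fin.card_Ici]; simp only [b]; omega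
  have hm : #{x | x ≤ a} = n - i := by rw [filter_ge_eq_Iic, Fin.card_Iic]; simp only [a]; omega
  rw [Fin.setOf_exists_val_eq hab rfl, ← Int.cast_inj (α := ℚ), Int.cast_natCast,
    cast_ncard_descent_exists_gt_exists_lt hab hi hm, Fintype.card_fin]
  simp only [Int.cast_sub, Int.cast_add, Int.cast_natCast]
  rw [cast_factorial_div_add_eq (by omega) (by omega) (by omega), Nat.cast_mul,
    show n - 1 - i = n - i - 1 by omega]
end
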